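/- Let G be a compact topological group, X a compact Hausdorff space, and η : G*X → X a continuous topological partial action. If the enveloping space X_G is Hausdorff, then G*X is closed in G × X. -/

import Mathlib

open Set

structure PartialAction (G : Type*) (X : Type*) [Group G] where
  D : G → Set X
  act : G → X → X
  D_one : D 1 = Set.univ
  act_one : ∀ x, act 1 x = x
  bijOn : ∀ g : G, Set.BijOn (act g) (D g⁻¹) (D g)
  image_inter : ∀ g h : G, act g '' (D g⁻¹ ∩ D h) = D g ∩ D (g * h)
  comp : ∀ g h : G, ∀ x ∈ D h⁻¹ ∩ D (h⁻¹ * g⁻¹), act g (act h x) = act (g * h) x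

/-- The domain `G*X = {(g,x) : x ∈ X_{g⁻¹}}` of a partial action. -/
def PartialAction.domSet {G X : Type*} [Group G] (pa : PartialAction G X) : Set (G × X) :=
  {p : G × X | p.2 ∈ pa.D p.1⁻¹}

/-- The relation `R` on `G × X`: `(g,x) R (h,y)` iff `x ∈ X_{g⁻¹h}` and `η_{h⁻¹g}(x) = y`. -/
def PartialAction.envRel {G X : Type*} [Group G] (pa : PartialAction G X) :
    G × X → G × X → Prop :=
  fun p q => p.2 ∈ pa.D (p.1⁻¹ * q.1) ∧ pa.act (q.1⁻¹ * p.1) p.2 = q.2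

/-- The orbit equivalence relation of a partial action. -/
def PartialAction.orbitRel {G X : Type*} [Group G] (pa : PartialAction G X) : X → X → Prop :=
  fun x y => ∃ g : G, x ∈ pa.D g⁻¹ ∧ pa.act g x = y

/-- A topological partial action: open domains, each `η_g` a homeomorphism onto its image. -/
structure TopPartialAction (G : Type*) (X : Type*) [Group G] [TopologicalSpace G]
    [TopologicalSpace X] extends PartialAction G X where
  isOpen_D : ∀ g : G, IsOpen (D g)
  continuousOn_act : ∀ g : G, ContinuousOn (act g) (D g⁻¹)

/-- A continuous topological partial action: the evaluation map on `G*X` is continuous. -/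
structure ContPartialAction (G : Type*) (X : Type*) [Group G] [TopologicalSpace G]
    [TopologicalSpace X] extends TopPartialAction G X where
  continuousOn_eval :
    ContinuousOn (fun p : G × X => act p.1 p.2) {p : G × X | p.2 ∈ D p.1⁻¹}

/-
`G*X` is exactly the set of points of `G × X` whose class in `X_G` has a representative `(1, y)`:
`(g, x) R (1, y)` says precisely that `x ∈ X_{g⁻¹}` and `η_g(x) = y`. So `G*X` is the preimage under
the quotient map of the image of the compact slice `{1} × X`; in the Hausdorff space `X_G` this
image is compact, hence closed, and so is its preimage.
-/

namespace PartialAction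

variable {G X : Type*} [Group G] (pa : PartialAction G X)

lemma act_inv_act {a : G} {x : X} (hx : x ∈ pa.D a⁻¹) : pa.act a⁻¹ (pa.act a x) = x := by
  rw [pa.comp a⁻¹ a x ⟨hx, by simp [pa.D_one]⟩, inv_mul_cancel, pa.act_one]

lemma mem_D_inv_of_act_mem {a b : G} {x : X} (hx : x ∈ pa.D a⁻¹)
    (hax : pa.act a x ∈ pa.D b⁻¹) : x ∈ pa.D (b * a)⁻¹ := by
  have hx' : x ∈ pa.act a⁻¹ '' (pa.D a⁻¹⁻¹ ∩ pa.D b⁻¹) :=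
    ⟨pa.act a x, ⟨by simpa using (pa.bijOn a).mapsTo hx, hax⟩, pa.act_inv_act hx⟩
  rw [pa.image_inter, ← mul_inv_rev] at hx'
  exact hx'.2

lemma act_act {a b : G} {x : X} (hx : x ∈ pa.D a⁻¹) (hax : pa.act a x ∈ pa.D b⁻¹) :
    pa.act b (pa.act a x) = pa.act (b * a) x :=
  pa.comp b a x ⟨hx, by simpa [mul_inv_rev] using pa.mem_D_inv_of_act_mem hx hax⟩

lemma envRel_iff {g h : G} {x y : X} :
    pa.envRel (g, x) (h, y) ↔ x ∈ pa.D (h⁻¹ * g)⁻¹ ∧ pa.act (h⁻¹ * g) x = y := by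
  simp [envRel, mul_inv_rev]

lemma envRel_symm {p q : G × X} (hpq : pa.envRel p q) : pa.envRel q p := by
  obtain ⟨g, x⟩ := p
  obtain ⟨h, y⟩ := q
  rw [envRel_iff] at hpq ⊢
  obtain ⟨hx, rfl⟩ := hpq
  refine ⟨by simpa [mul_inv_rev] using (pa.bijOn _).mapsTo hx, ?_⟩
  rw [show g⁻¹ * h = (h⁻¹ * g)⁻¹ by group, pa.act_inv_act hx]

lemma envRel_trans {p q r : G × X} (hpq : pa.envRel p q) (hqr : pa.envRel q r) :
    pa.envRel p r := by
  obtain ⟨g, x⟩ := p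
  obtain ⟨h, y⟩ := q
  obtain ⟨k, z⟩ := r
  rw [envRel_iff] at hpq hqr ⊢
  obtain ⟨hx, rfl⟩ := hpq
  obtain ⟨hy, rfl⟩ := hqr
  have hprod : k⁻¹ * h * (h⁻¹ * g) = k⁻¹ * g := by group
  refine ⟨hprod ▸ pa.mem_D_inv_of_act_mem hx hy, ?_⟩
  rw [pa.act_act hx hy, hprod]

lemma equivalence_envRel : Equivalence pa.envRel where
  refl p := by simp [envRel, pa.D_one, pa.act_one]
  symm := pa.envRel_symm
  trans := pa.envRel_trans

lemma quot_mk_eq_one_iff {g : G} {x y : X} :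
    Quot.mk pa.envRel (g, x) = Quot.mk pa.envRel (1, y) ↔ x ∈ pa.D g⁻¹ ∧ pa.act g x = y := by
  rw [Quot.eq, pa.equivalence_envRel.eqvGen_iff, envRel_iff, inv_one, one_mul]

lemma domSet_eq_preimage_range :
    pa.domSet = Quot.mk pa.envRel ⁻¹' range fun y => Quot.mk pa.envRel (1, y) := by
  ext ⟨g, x⟩
  simp only [mem_preimage, mem_range, eq_comm (b := Quot.mk _ (g, x)), quot_mk_eq_one_iff]
  exact ⟨fun hx => ⟨_, hx, rfl⟩, fun ⟨_, hx, _⟩ => hx⟩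

end PartialAction

theorem statement14_general {G X : Type*} [Group G] [TopologicalSpace G] [TopologicalSpace X]
    [CompactSpace X]
    (pa : ContPartialAction G X)
    (hT2 : T2Space (Quot pa.envRel)) :
    IsClosed pa.domSet := by
  have hslice : IsCompact (range fun y : X => Quot.mk pa.envRel (1, y)) :=
    isCompact_range (continuous_quot_mk.comp (Continuous.prodMk_right 1))
  rw [PartialAction.domSet_eq_preimage_range]
  exact hslice.isClosed.preimage continuous_quot_mk

/-- If `G` is compact, `X` is compact Hausdorff and the enveloping space `X_G`
is Hausdorff, then `G*X` is closed in `G × X`. -/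
theorem statement14 {G X : Type*} [Group G] [TopologicalSpace G] [TopologicalSpace X]
    [CompactSpace G] [CompactSpace X] [T2Space X]
    (pa : ContPartialAction G X)
    (hT2 : T2Space (Quot pa.envRel)) :
    IsClosed pa.domSet :=
  statement14_general pa hT2
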